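/- arXiv:math/9906173 — 4 statements merged into one kernel-verified Lean document; each statement's English description precedes it below -/
import Mathlib

section
/- Φ is a bijection from U × (k^×)^d onto U∨ × (k^×)^d, and its inverse is the map ξ ↦ (−1)^d · R∨(ξ)^{−2} · Φ∨(ξ), where the scalar (−1)^d · R∨(ξ)^{−2} multiplies all n + d coordinates of Φ∨(ξ) simultaneously. (Paper's Lemma 3, stated at the level of the explicit gradient formulas.) -/
/-!
Write `r = R(x, t)` and `e = (-1)^d`. Homogeneity of `f∨` together with `f∨(F x) = f(x)⁻¹` gives
`R∨(Φ(x, t)) = e / r`, and then `F∨(r • F x) = r⁻¹ • x` gives `Φ∨(Φ(x, t)) = (e / r²) • (x, t)`;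
since `e² = 1`, rescaling by `e · R∨(Φ(x, t))⁻² = e · r²` undoes this. The hypotheses are
symmetric in the two sides, so also `Φ(Φ∨ ξ) = (e / R∨(ξ)²) • ξ`, and since `Φ` is homogeneous of
degree `-1`, rescaling `Φ∨ ξ` by `e / R∨(ξ)²` first gives a right inverse.
-/

open Finset

namespace Prehomogeneous

variable {k V : Type*} [Field k] {d : ℕ}

def potential (f : V → k) (y : V × (Fin d → k)) : k := f y.1 / ∏ i, y.2 i

def gradDomain (U : Set V) : Set (V × (Fin d → k)) := {y | y.1 ∈ U ∧ ∀ i, y.2 i ≠ 0}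

lemma potential_ne_zero {U : Set V} {f : V → k} (hf0 : ∀ x ∈ U, f x ≠ 0)
    {y : V × (Fin d → k)} (hy : y ∈ gradDomain U) : potential f y ≠ 0 :=
  div_ne_zero (hf0 _ hy.1) (prod_ne_zero_iff.2 fun i _ => hy.2 i)

lemma neg_one_pow_sq_eq_one (d : ℕ) : ((-1 : k) ^ d) ^ 2 = 1 := by
  rw [← pow_mul, mul_comm, pow_mul, neg_one_sq, one_pow]

lemma neg_one_pow_mul_inv_sq_ne_zero (d : ℕ) {a : k} (ha : a ≠ 0) :
    (-1 : k) ^ d * (a ^ 2)⁻¹ ≠ 0 :=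
  mul_ne_zero (pow_ne_zero _ (neg_ne_zero.2 one_ne_zero)) (inv_ne_zero (pow_ne_zero _ ha))

variable [AddCommGroup V] [Module k V]

def gradMap (f : V → k) (F : V → V) (y : V × (Fin d → k)) : V × (Fin d → k) :=
  (potential f y • F y.1, fun i => -potential f y / y.2 i)

def gradMapInv (f : V → k) (F : V → V) (y : V × (Fin d → k)) : V × (Fin d → k) :=
  ((-1 : k) ^ d * (potential f y ^ 2)⁻¹) • gradMap f F y

section

variable {U Ud : Set V} {f fd : V → k} {F Fd : V → V} {y ξ : V × (Fin d → k)}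

lemma smul_mem_gradDomain (hU : ∀ c : k, c ≠ 0 → ∀ x ∈ U, c • x ∈ U) {c : k} (hc : c ≠ 0)
    (hy : y ∈ gradDomain U) : c • y ∈ gradDomain U :=
  ⟨hU c hc _ hy.1, fun i => mul_ne_zero hc (hy.2 i)⟩

lemma potential_smul (hfhom : ∀ c : k, c ≠ 0 → ∀ x ∈ U, f (c • x) = c ^ d * f x)
    {c : k} (hc : c ≠ 0) (hy : y.1 ∈ U) : potential f (c • y) = potential f y := by
  simp only [potential, Prod.smul_fst, Prod.smul_snd, Pi.smul_apply, smul_eq_mul,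
    prod_mul_distrib, prod_const, card_univ, Fintype.card_fin, hfhom c hc _ hy]
  exact mul_div_mul_left _ _ (pow_ne_zero _ hc)

lemma gradMap_smul (hfhom : ∀ c : k, c ≠ 0 → ∀ x ∈ U, f (c • x) = c ^ d * f x)
    (hFhom : ∀ c : k, c ≠ 0 → ∀ x ∈ U, F (c • x) = c⁻¹ • F x)
    {c : k} (hc : c ≠ 0) (hy : y.1 ∈ U) : gradMap f F (c • y) = c⁻¹ • gradMap f F y := by
  simp only [gradMap, potential_smul hfhom hc hy, Prod.smul_fst, Prod.smul_snd, hFhom c hc _ hy,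
    smul_comm (potential f y) c⁻¹, Prod.smul_mk]
  congr 1
  funext i
  simp only [Pi.smul_apply, smul_eq_mul, div_eq_mul_inv, mul_inv]
  ring

lemma gradMap_mem_gradDomain (hUdstab : ∀ c : k, c ≠ 0 → ∀ ξ ∈ Ud, c • ξ ∈ Ud) (hf0 : ∀ x ∈ U, f x ≠ 0)
    (hFmem : ∀ x ∈ U, F x ∈ Ud) (hy : y ∈ gradDomain U) : gradMap f F y ∈ gradDomain Ud :=
  ⟨hUdstab _ (potential_ne_zero hf0 hy) _ (hFmem _ hy.1),
    fun i => div_ne_zero (neg_ne_zero.2 (potential_ne_zero hf0 hy)) (hy.2 i)⟩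

lemma potential_gradMap (hf0 : ∀ x ∈ U, f x ≠ 0)
    (hFmem : ∀ x ∈ U, F x ∈ Ud) (hnorm : ∀ x ∈ U, fd (F x) = (f x)⁻¹)
    (hfdhom : ∀ c : k, c ≠ 0 → ∀ ξ ∈ Ud, fd (c • ξ) = c ^ d * fd ξ) (hy : y ∈ gradDomain U) :
    potential fd (gradMap f F y) = (-1) ^ d / potential f y := by
  have hr := potential_ne_zero hf0 hy
  have hprod : ∏ i, y.2 i ≠ 0 := prod_ne_zero_iff.2 fun i _ => hy.2 i
  have hsign := neg_one_pow_sq_eq_one (k := k) d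
  simp only [potential, gradMap] at hr ⊢
  rw [hfdhom _ hr _ (hFmem _ hy.1), hnorm _ hy.1, prod_div_distrib, prod_const, card_univ,
    Fintype.card_fin, neg_pow]
  generalize (-1 : k) ^ d = s at hsign ⊢
  have hs : s ≠ 0 := by rintro rfl; simp at hsign
  field_simp [hf0 _ hy.1]
  linear_combination (-1 : k) * hsign

lemma gradMap_gradMap (hf0 : ∀ x ∈ U, f x ≠ 0)
    (hFmem : ∀ x ∈ U, F x ∈ Ud) (hnorm : ∀ x ∈ U, fd (F x) = (f x)⁻¹)
    (hfdhom : ∀ c : k, c ≠ 0 → ∀ ξ ∈ Ud, fd (c • ξ) = c ^ d * fd ξ)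
    (hFdhom : ∀ c : k, c ≠ 0 → ∀ ξ ∈ Ud, Fd (c • ξ) = c⁻¹ • Fd ξ)
    (hFdF : ∀ x ∈ U, Fd (F x) = x) (hy : y ∈ gradDomain U) :
    gradMap fd Fd (gradMap f F y) = ((-1) ^ d / potential f y ^ 2) • y := by
  have hr := potential_ne_zero hf0 hy
  have hpot := potential_gradMap hf0 hFmem hnorm hfdhom hy
  refine Prod.ext ?_ (funext fun i => ?_)
  · change potential fd (gradMap f F y) • Fd (potential f y • F y.1) = _
    rw [hpot, hFdhom _ hr _ (hFmem _ hy.1), hFdF _ hy.1, smul_smul, Prod.smul_fst]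
    congr 1
    field_simp
  · change -potential fd (gradMap f F y) / (-potential f y / y.2 i) = _
    rw [hpot, Prod.smul_snd, Pi.smul_apply, smul_eq_mul]
    field_simp [hy.2 i]

lemma gradMapInv_gradMap (hf0 : ∀ x ∈ U, f x ≠ 0)
    (hFmem : ∀ x ∈ U, F x ∈ Ud) (hnorm : ∀ x ∈ U, fd (F x) = (f x)⁻¹)
    (hfdhom : ∀ c : k, c ≠ 0 → ∀ ξ ∈ Ud, fd (c • ξ) = c ^ d * fd ξ)
    (hFdhom : ∀ c : k, c ≠ 0 → ∀ ξ ∈ Ud, Fd (c • ξ) = c⁻¹ • Fd ξ)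
    (hFdF : ∀ x ∈ U, Fd (F x) = x) (hy : y ∈ gradDomain U) :
    gradMapInv fd Fd (gradMap f F y) = y := by
  have hr := potential_ne_zero hf0 hy
  have hsign := neg_one_pow_sq_eq_one (k := k) d
  rw [gradMapInv, potential_gradMap hf0 hFmem hnorm hfdhom hy,
    gradMap_gradMap hf0 hFmem hnorm hfdhom hFdhom hFdF hy, smul_smul]
  convert one_smul k y
  generalize (-1 : k) ^ d = s at hsign ⊢
  have hs : s ≠ 0 := by rintro rfl; simp at hsign
  field_simp

lemma gradMapInv_mem_gradDomain (hUstab : ∀ c : k, c ≠ 0 → ∀ x ∈ U, c • x ∈ U)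
    (hfd0 : ∀ ξ ∈ Ud, fd ξ ≠ 0) (hFdmem : ∀ ξ ∈ Ud, Fd ξ ∈ U)
    (hξ : ξ ∈ gradDomain Ud) : gradMapInv fd Fd ξ ∈ gradDomain U :=
  smul_mem_gradDomain hUstab (neg_one_pow_mul_inv_sq_ne_zero d (potential_ne_zero hfd0 hξ))
    (gradMap_mem_gradDomain hUstab hfd0 hFdmem hξ)

lemma gradMap_gradMapInv (hUstab : ∀ c : k, c ≠ 0 → ∀ x ∈ U, c • x ∈ U)
    (hfd0 : ∀ ξ ∈ Ud, fd ξ ≠ 0) (hFdmem : ∀ ξ ∈ Ud, Fd ξ ∈ U)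
    (hnormd : ∀ ξ ∈ Ud, f (Fd ξ) = (fd ξ)⁻¹)
    (hfhom : ∀ c : k, c ≠ 0 → ∀ x ∈ U, f (c • x) = c ^ d * f x)
    (hFhom : ∀ c : k, c ≠ 0 → ∀ x ∈ U, F (c • x) = c⁻¹ • F x)
    (hFFd : ∀ ξ ∈ Ud, F (Fd ξ) = ξ) (hξ : ξ ∈ gradDomain Ud) :
    gradMap f F (gradMapInv fd Fd ξ) = ξ := by
  have hc := neg_one_pow_mul_inv_sq_ne_zero d (potential_ne_zero hfd0 hξ)
  rw [gradMapInv, gradMap_smul hfhom hFhom hc (gradMap_mem_gradDomain hUstab hfd0 hFdmem hξ).1,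
    gradMap_gradMap hfd0 hFdmem hnormd hfhom hFhom hFFd hξ, smul_smul, div_eq_mul_inv,
    inv_mul_cancel₀ hc, one_smul]

end

end Prehomogeneous

open Prehomogeneous in
theorem lemma3_gradient_bijection_general
    {k : Type*} [Field k] {n d : ℕ}
    (U Ud : Set (Fin n → k))
    (f fd : (Fin n → k) → k) (F Fd : (Fin n → k) → (Fin n → k))
    (hUstab : ∀ c : k, c ≠ 0 → ∀ x ∈ U, c • x ∈ U)
    (hUdstab : ∀ c : k, c ≠ 0 → ∀ ξ ∈ Ud, c • ξ ∈ Ud)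
    (hf0 : ∀ x ∈ U, f x ≠ 0) (hfd0 : ∀ ξ ∈ Ud, fd ξ ≠ 0)
    (hFmem : ∀ x ∈ U, F x ∈ Ud) (hFdmem : ∀ ξ ∈ Ud, Fd ξ ∈ U)
    (hFdF : ∀ x ∈ U, Fd (F x) = x) (hFFd : ∀ ξ ∈ Ud, F (Fd ξ) = ξ)
    (hnorm : ∀ x ∈ U, fd (F x) = (f x)⁻¹)
    (hnormd : ∀ ξ ∈ Ud, f (Fd ξ) = (fd ξ)⁻¹)
    (hfhom : ∀ c : k, c ≠ 0 → ∀ x ∈ U, f (c • x) = c ^ d * f x)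
    (hFhom : ∀ c : k, c ≠ 0 → ∀ x ∈ U, F (c • x) = c⁻¹ • F x)
    (hfdhom : ∀ c : k, c ≠ 0 → ∀ ξ ∈ Ud, fd (c • ξ) = c ^ d * fd ξ)
    (hFdhom : ∀ c : k, c ≠ 0 → ∀ ξ ∈ Ud, Fd (c • ξ) = c⁻¹ • Fd ξ)
    (R Rd : (Fin n → k) × (Fin d → k) → k)
    (hR : ∀ x t, R (x, t) = f x / ∏ i, t i)
    (hRd : ∀ ξ t, Rd (ξ, t) = fd ξ / ∏ i, t i)
    (Φ Φd : (Fin n → k) × (Fin d → k) → (Fin n → k) × (Fin d → k))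
    (hΦ : ∀ x t, Φ (x, t) = (R (x, t) • F x, fun i => -R (x, t) / t i))
    (hΦd : ∀ ξ t, Φd (ξ, t) = (Rd (ξ, t) • Fd ξ, fun i => -Rd (ξ, t) / t i))
    (D Dd : Set ((Fin n → k) × (Fin d → k)))
    (hD : D = {y | y.1 ∈ U ∧ ∀ i, y.2 i ≠ 0})
    (hDd : Dd = {ξ | ξ.1 ∈ Ud ∧ ∀ i, ξ.2 i ≠ 0}) :
    Set.BijOn Φ D Dd ∧
    (∀ ξ ∈ Dd, (((-1 : k) ^ d * ((Rd ξ) ^ 2)⁻¹) • Φd ξ) ∈ D ∧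
      Φ (((-1 : k) ^ d * ((Rd ξ) ^ 2)⁻¹) • Φd ξ) = ξ) ∧
    (∀ y ∈ D, ((-1 : k) ^ d * ((Rd (Φ y)) ^ 2)⁻¹) • Φd (Φ y) = y) := by
  obtain rfl : Φ = gradMap f F := funext fun ⟨x, t⟩ => by rw [hΦ, hR]; rfl
  obtain rfl : Φd = gradMap fd Fd := funext fun ⟨ξ, t⟩ => by rw [hΦd, hRd]; rfl
  obtain rfl : Rd = potential fd := funext fun ⟨ξ, t⟩ => hRd ξ t
  subst hD hDd
  have maps_to : Set.MapsTo (gradMap (d := d) f F) (gradDomain U) (gradDomain Ud) :=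
    fun y hy => gradMap_mem_gradDomain hUdstab hf0 hFmem hy
  have inv_maps_to : Set.MapsTo (gradMapInv (d := d) fd Fd) (gradDomain Ud) (gradDomain U) :=
    fun ξ hξ => gradMapInv_mem_gradDomain hUstab hfd0 hFdmem hξ
  have inv_on : Set.InvOn (gradMapInv fd Fd) (gradMap (d := d) f F) (gradDomain U)
      (gradDomain Ud) :=
    ⟨fun y hy => gradMapInv_gradMap hf0 hFmem hnorm hfdhom hFdhom hFdF hy,
      fun ξ hξ => gradMap_gradMapInv hUstab hfd0 hFdmem hnormd hfhom hFhom hFFd hξ⟩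
  exact ⟨inv_on.bijOn maps_to inv_maps_to, fun ξ hξ => ⟨inv_maps_to hξ, inv_on.2 hξ⟩, inv_on.1⟩

/-- Lemma 3: the gradient map `Φ(x,t) = (R(x,t)·F(x), -R(x,t)/t₁, …, -R(x,t)/t_d)`
with `R(x,t) = f(x)/(t₁⋯t_d)` is a bijection from `U × (k^×)^d` onto `U∨ × (k^×)^d`,
with inverse `ξ ↦ (-1)^d · R∨(ξ)⁻² · Φ∨(ξ)` (the scalar multiplying all `n + d`
coordinates simultaneously). -/
theorem lemma3_gradient_bijection
    {k : Type*} [Field k] {n d : ℕ} (hn : 1 ≤ n) (hd : 1 ≤ d)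
    (U Ud : Set (Fin n → k))
    (f fd : (Fin n → k) → k) (F Fd : (Fin n → k) → (Fin n → k))
    (hUstab : ∀ c : k, c ≠ 0 → ∀ x ∈ U, c • x ∈ U)
    (hUdstab : ∀ c : k, c ≠ 0 → ∀ ξ ∈ Ud, c • ξ ∈ Ud)
    (hf0 : ∀ x ∈ U, f x ≠ 0) (hfd0 : ∀ ξ ∈ Ud, fd ξ ≠ 0)
    (hFmem : ∀ x ∈ U, F x ∈ Ud) (hFdmem : ∀ ξ ∈ Ud, Fd ξ ∈ U)
    (hFdF : ∀ x ∈ U, Fd (F x) = x) (hFFd : ∀ ξ ∈ Ud, F (Fd ξ) = ξ)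
    (hnorm : ∀ x ∈ U, fd (F x) = (f x)⁻¹)
    (hnormd : ∀ ξ ∈ Ud, f (Fd ξ) = (fd ξ)⁻¹)
    (hfhom : ∀ c : k, c ≠ 0 → ∀ x ∈ U, f (c • x) = c ^ d * f x)
    (hFhom : ∀ c : k, c ≠ 0 → ∀ x ∈ U, F (c • x) = c⁻¹ • F x)
    (hfdhom : ∀ c : k, c ≠ 0 → ∀ ξ ∈ Ud, fd (c • ξ) = c ^ d * fd ξ)
    (hFdhom : ∀ c : k, c ≠ 0 → ∀ ξ ∈ Ud, Fd (c • ξ) = c⁻¹ • Fd ξ)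
    (R Rd : (Fin n → k) × (Fin d → k) → k)
    (hR : ∀ x t, R (x, t) = f x / ∏ i, t i)
    (hRd : ∀ ξ t, Rd (ξ, t) = fd ξ / ∏ i, t i)
    (Φ Φd : (Fin n → k) × (Fin d → k) → (Fin n → k) × (Fin d → k))
    (hΦ : ∀ x t, Φ (x, t) = (R (x, t) • F x, fun i => -R (x, t) / t i))
    (hΦd : ∀ ξ t, Φd (ξ, t) = (Rd (ξ, t) • Fd ξ, fun i => -Rd (ξ, t) / t i))
    (D Dd : Set ((Fin n → k) × (Fin d → k)))
    (hD : D = {y | y.1 ∈ U ∧ ∀ i, y.2 i ≠ 0})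
    (hDd : Dd = {ξ | ξ.1 ∈ Ud ∧ ∀ i, ξ.2 i ≠ 0}) :
    Set.BijOn Φ D Dd ∧
    (∀ ξ ∈ Dd, (((-1 : k) ^ d * ((Rd ξ) ^ 2)⁻¹) • Φd ξ) ∈ D ∧
      Φ (((-1 : k) ^ d * ((Rd ξ) ^ 2)⁻¹) • Φd ξ) = ξ) ∧
    (∀ y ∈ D, ((-1 : k) ^ d * ((Rd (Φ y)) ^ 2)⁻¹) • Φd (Φ y) = y) :=
  lemma3_gradient_bijection_general U Ud f fd F Fd hUstab hUdstab hf0 hfd0 hFmem hFdmem hFdF hFFd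
    hnorm hnormd hfhom hFhom hfdhom hFdhom R Rd hR hRd Φ Φd hΦ hΦd D Dd hD hDd
end

section
/- For every ξ = (x∨, t∨) ∈ U∨ × (k^×)^d there is exactly one point y ∈ U × (k^×)^d with Φ(y) = −ξ (i.e. the function R_ξ(y) = R(y) + ⟨y,ξ⟩ has a unique critical point), and this point y satisfies ⟨y,ξ⟩ = 0 and R(y) + ⟨y,ξ⟩ = (−1)^d · R∨(ξ)⁻¹. In particular the unique critical value of R_ξ is (−1)^d · R∨(ξ)⁻¹. (Paper's Lemma 3.5, stated at the level of the explicit gradient formulas.) -/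
/-!
The critical-point equations `R(y) F(x) = -x∨`, `R(y) / tⱼ = t∨ⱼ` say, with `s = R(y)`, that
`tⱼ = s / t∨ⱼ` and `F(x) = (-s)⁻¹ x∨`, i.e. `x = -s F∨(x∨)`. Along this curve the homogeneity of
`f` and the normalization `f(F∨ ξ) = f∨(ξ)⁻¹` make `R` constant, equal to `(-1)^d R∨(ξ)⁻¹`, so the
consistency condition `s = R(y)` pins down `s` and hence `y`. On the same curve Euler's identity
gives `⟨y, ξ⟩ = -s d + d s = 0`.
-/

open Finset

namespace Prehomogeneous

variable {k : Type*} [Field k] {n d : ℕ}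

def extendedInvariant (f : (Fin n → k) → k) (y : (Fin n → k) × (Fin d → k)) : k :=
  f y.1 / ∏ i, y.2 i

def extendedGradient (f : (Fin n → k) → k) (F : (Fin n → k) → Fin n → k)
    (y : (Fin n → k) × (Fin d → k)) : (Fin n → k) × (Fin d → k) :=
  (extendedInvariant f y • F y.1, fun i => -extendedInvariant f y / y.2 i)

def criticalCurve (Fd : (Fin n → k) → Fin n → k) (xd : Fin n → k) (td : Fin d → k) (s : k) :
    (Fin n → k) × (Fin d → k) :=
  ((-s) • Fd xd, fun i => s / td i)

def criticalValue (fd : (Fin n → k) → k) (xd : Fin n → k) (td : Fin d → k) : k :=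
  (-1) ^ d * (fd xd / ∏ i, td i)⁻¹

theorem criticalValue_ne_zero {fd : (Fin n → k) → k} {xd : Fin n → k} {td : Fin d → k}
    (hfd : fd xd ≠ 0) (htd : ∀ i, td i ≠ 0) : criticalValue fd xd td ≠ 0 :=
  mul_ne_zero (pow_ne_zero _ (neg_ne_zero.2 one_ne_zero))
    (inv_ne_zero (div_ne_zero hfd (prod_ne_zero_iff.2 fun i _ => htd i)))

theorem extendedInvariant_ne_zero {f : (Fin n → k) → k} {x : Fin n → k} {t : Fin d → k}
    (hfx : f x ≠ 0) (ht : ∀ i, t i ≠ 0) : extendedInvariant f (x, t) ≠ 0 :=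
  div_ne_zero hfx (prod_ne_zero_iff.2 fun i _ => ht i)

theorem criticalCurve_mem {U Ud : Set (Fin n → k)} {Fd : (Fin n → k) → Fin n → k}
    (hUstab : ∀ c : k, c ≠ 0 → ∀ x ∈ U, c • x ∈ U) (hFdmem : ∀ ξ ∈ Ud, Fd ξ ∈ U)
    {xd : Fin n → k} {td : Fin d → k} (hxd : xd ∈ Ud) (htd : ∀ i, td i ≠ 0) {s : k}
    (hs : s ≠ 0) :
    (criticalCurve Fd xd td s).1 ∈ U ∧ ∀ i, (criticalCurve Fd xd td s).2 i ≠ 0 :=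
  ⟨hUstab _ (neg_ne_zero.2 hs) _ (hFdmem _ hxd), fun i => div_ne_zero hs (htd i)⟩

theorem eq_criticalCurve_of_extendedGradient_eq {U Ud : Set (Fin n → k)}
    {f : (Fin n → k) → k} {F Fd : (Fin n → k) → Fin n → k}
    (hFdF : ∀ x ∈ U, Fd (F x) = x)
    (hFdhom : ∀ c : k, c ≠ 0 → ∀ ξ ∈ Ud, Fd (c • ξ) = c⁻¹ • Fd ξ)
    {xd : Fin n → k} {td : Fin d → k} (hxd : xd ∈ Ud) {x : Fin n → k} {t : Fin d → k}
    (hx : x ∈ U) (hs : extendedInvariant f (x, t) ≠ 0)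
    (h : extendedGradient f F (x, t) = -(xd, td)) :
    (x, t) = criticalCurve Fd xd td (extendedInvariant f (x, t)) := by
  set s := extendedInvariant f (x, t)
  have hFx : s • F x = -xd := congrArg Prod.fst h
  have htd : ∀ i, -s / t i = -td i := fun i => congrFun (congrArg Prod.snd h) i
  have hns : -s ≠ 0 := neg_ne_zero.2 hs
  have hFx' : F x = (-s)⁻¹ • xd := by
    rw [eq_inv_smul_iff₀ hns, neg_smul, hFx, neg_neg]
  refine Prod.ext ?_ (funext fun i => ?_)
  · calc x = Fd (F x) := (hFdF x hx).symm
      _ = (-s) • Fd xd := by rw [hFx', hFdhom _ (inv_ne_zero hns) _ hxd, inv_inv]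
  · have hti : s / t i = td i := neg_injective (by rw [← neg_div]; exact htd i)
    show t i = s / td i
    rw [← hti, div_div_cancel₀ hs]

theorem extendedInvariant_criticalCurve {U Ud : Set (Fin n → k)} {f fd : (Fin n → k) → k}
    {Fd : (Fin n → k) → Fin n → k}
    (hfhom : ∀ c : k, c ≠ 0 → ∀ x ∈ U, f (c • x) = c ^ d * f x)
    (hnormd : ∀ ξ ∈ Ud, f (Fd ξ) = (fd ξ)⁻¹) (hFdmem : ∀ ξ ∈ Ud, Fd ξ ∈ U)
    {xd : Fin n → k} (hxd : xd ∈ Ud) (td : Fin d → k) {s : k} (hs : s ≠ 0) :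
    extendedInvariant f (criticalCurve Fd xd td s) = criticalValue fd xd td := by
  simp only [extendedInvariant, criticalCurve, criticalValue]
  rw [hfhom _ (neg_ne_zero.2 hs) _ (hFdmem _ hxd), hnormd _ hxd, prod_div_distrib, prod_const,
    card_univ, Fintype.card_fin, neg_pow]
  field_simp

theorem extendedGradient_criticalCurve {U Ud : Set (Fin n → k)} {f : (Fin n → k) → k}
    {F Fd : (Fin n → k) → Fin n → k}
    (hFhom : ∀ c : k, c ≠ 0 → ∀ x ∈ U, F (c • x) = c⁻¹ • F x)
    (hFFd : ∀ ξ ∈ Ud, F (Fd ξ) = ξ) (hFdmem : ∀ ξ ∈ Ud, Fd ξ ∈ U)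
    {xd : Fin n → k} {td : Fin d → k} (hxd : xd ∈ Ud) {s : k} (hs : s ≠ 0)
    (hR : extendedInvariant f (criticalCurve Fd xd td s) = s) :
    extendedGradient f F (criticalCurve Fd xd td s) = -(xd, td) := by
  rw [extendedGradient, hR, criticalCurve, hFhom _ (neg_ne_zero.2 hs) _ (hFdmem _ hxd), hFFd _ hxd]
  ext i
  · simp [hs]
  · simp [neg_div, div_div_cancel₀ hs]

theorem pairing_criticalCurve {Fd : (Fin n → k) → Fin n → k} {xd : Fin n → k}
    (hEuler : Fd xd ⬝ᵥ xd = d) {td : Fin d → k} (htd : ∀ i, td i ≠ 0) (s : k) :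
    (criticalCurve Fd xd td s).1 ⬝ᵥ xd + (criticalCurve Fd xd td s).2 ⬝ᵥ td = 0 := by
  have hsum : (fun i => s / td i) ⬝ᵥ td = d * s := by
    simp [dotProduct, div_mul_cancel₀ s (htd _)]
  rw [criticalCurve, neg_smul, neg_dotProduct, smul_dotProduct, hEuler, hsum, smul_eq_mul]
  ring

theorem extendedGradient_eq_neg_iff {U Ud : Set (Fin n → k)} {f fd : (Fin n → k) → k}
    {F Fd : (Fin n → k) → Fin n → k} (hf0 : ∀ x ∈ U, f x ≠ 0) (hFdmem : ∀ ξ ∈ Ud, Fd ξ ∈ U)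
    (hFdF : ∀ x ∈ U, Fd (F x) = x) (hFFd : ∀ ξ ∈ Ud, F (Fd ξ) = ξ)
    (hnormd : ∀ ξ ∈ Ud, f (Fd ξ) = (fd ξ)⁻¹)
    (hfhom : ∀ c : k, c ≠ 0 → ∀ x ∈ U, f (c • x) = c ^ d * f x)
    (hFhom : ∀ c : k, c ≠ 0 → ∀ x ∈ U, F (c • x) = c⁻¹ • F x)
    (hFdhom : ∀ c : k, c ≠ 0 → ∀ ξ ∈ Ud, Fd (c • ξ) = c⁻¹ • Fd ξ)
    {xd : Fin n → k} {td : Fin d → k} (hxd : xd ∈ Ud) (hfd : fd xd ≠ 0) (htd : ∀ i, td i ≠ 0)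
    {y : (Fin n → k) × (Fin d → k)} (hy : y.1 ∈ U ∧ ∀ i, y.2 i ≠ 0) :
    extendedGradient f F y = -(xd, td) ↔ y = criticalCurve Fd xd td (criticalValue fd xd td) := by
  constructor
  · intro h
    obtain ⟨x, t⟩ := y
    have hs := extendedInvariant_ne_zero (hf0 x hy.1) hy.2
    have hy' := eq_criticalCurve_of_extendedGradient_eq hFdF hFdhom hxd hy.1 hs h
    have hsr : extendedInvariant f (x, t) = criticalValue fd xd td := by
      rw [hy']
      exact extendedInvariant_criticalCurve hfhom hnormd hFdmem hxd td hs
    rwa [hsr] at hy'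
  · rintro rfl
    have hr := criticalValue_ne_zero hfd htd
    exact extendedGradient_criticalCurve hFhom hFFd hFdmem hxd hr
      (extendedInvariant_criticalCurve hfhom hnormd hFdmem hxd td hr)

end Prehomogeneous

open Prehomogeneous

theorem lemma3_5_unique_critical_value_general
    {k : Type*} [Field k] {n d : ℕ}
    (U Ud : Set (Fin n → k))
    (f fd : (Fin n → k) → k) (F Fd : (Fin n → k) → (Fin n → k))
    (hUstab : ∀ c : k, c ≠ 0 → ∀ x ∈ U, c • x ∈ U)
    (hf0 : ∀ x ∈ U, f x ≠ 0) (hfd0 : ∀ ξ ∈ Ud, fd ξ ≠ 0)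
    (hFdmem : ∀ ξ ∈ Ud, Fd ξ ∈ U)
    (hFdF : ∀ x ∈ U, Fd (F x) = x) (hFFd : ∀ ξ ∈ Ud, F (Fd ξ) = ξ)
    (hnormd : ∀ ξ ∈ Ud, f (Fd ξ) = (fd ξ)⁻¹)
    (hfhom : ∀ c : k, c ≠ 0 → ∀ x ∈ U, f (c • x) = c ^ d * f x)
    (hFhom : ∀ c : k, c ≠ 0 → ∀ x ∈ U, F (c • x) = c⁻¹ • F x)
    (hFdhom : ∀ c : k, c ≠ 0 → ∀ ξ ∈ Ud, Fd (c • ξ) = c⁻¹ • Fd ξ)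
    (hEuler : ∀ ξ ∈ Ud, ∑ i, Fd ξ i * ξ i = (d : k))
    (R Rd : (Fin n → k) × (Fin d → k) → k)
    (hR : ∀ x t, R (x, t) = f x / ∏ i, t i)
    (hRd : ∀ ξ t, Rd (ξ, t) = fd ξ / ∏ i, t i)
    (Φ : (Fin n → k) × (Fin d → k) → (Fin n → k) × (Fin d → k))
    (hΦ : ∀ x t, Φ (x, t) = (R (x, t) • F x, fun i => -R (x, t) / t i))
    (pair : (Fin n → k) × (Fin d → k) → (Fin n → k) × (Fin d → k) → k)
    (hpair : ∀ y ξ, pair y ξ = (∑ i, y.1 i * ξ.1 i) + ∑ j, y.2 j * ξ.2 j)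
    (D Dd : Set ((Fin n → k) × (Fin d → k)))
    (hD : D = {y | y.1 ∈ U ∧ ∀ i, y.2 i ≠ 0})
    (hDd : Dd = {ξ | ξ.1 ∈ Ud ∧ ∀ i, ξ.2 i ≠ 0}) :
    ∀ ξ ∈ Dd, (∃! y, y ∈ D ∧ Φ y = -ξ) ∧
      ∀ y, y ∈ D → Φ y = -ξ →
        pair y ξ = 0 ∧ R y + pair y ξ = (-1 : k) ^ d * (Rd ξ)⁻¹ := by
  rintro ⟨xd, td⟩ hξ
  rw [hDd] at hξ
  obtain ⟨hxd, htd⟩ := hξ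
  obtain rfl : R = extendedInvariant f := funext fun y => hR y.1 y.2
  obtain rfl : Φ = extendedGradient f F := funext fun y => hΦ y.1 y.2
  have hfd := hfd0 xd hxd
  have hr := criticalValue_ne_zero hfd htd
  set y₀ := criticalCurve Fd xd td (criticalValue fd xd td)
  have hy₀ : y₀ ∈ D := hD ▸ criticalCurve_mem hUstab hFdmem hxd htd hr
  have hcrit : ∀ y ∈ D, extendedGradient f F y = -(xd, td) ↔ y = y₀ := fun y hy =>
    extendedGradient_eq_neg_iff hf0 hFdmem hFdF hFFd hnormd hfhom hFhom hFdhom hxd hfd htd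
      (by rwa [hD] at hy)
  refine ⟨⟨y₀, ⟨hy₀, (hcrit y₀ hy₀).2 rfl⟩, fun y hy => (hcrit y hy.1).1 hy.2⟩,
    fun y hy hΦy => ?_⟩
  obtain rfl := (hcrit y hy).1 hΦy
  have hpair₀ : pair y₀ (xd, td) = 0 :=
    (hpair _ _).trans (pairing_criticalCurve (hEuler xd hxd) htd _)
  refine ⟨hpair₀, ?_⟩
  rw [hpair₀, add_zero, extendedInvariant_criticalCurve hfhom hnormd hFdmem hxd td hr, hRd]
  rfl

/-- Lemma 3.5: for every `ξ ∈ U∨ × (k^×)^d` there is exactly one point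
`y ∈ U × (k^×)^d` with `Φ(y) = -ξ` (i.e. `R_ξ(y) = R(y) + ⟨y,ξ⟩` has a unique
critical point), and this point satisfies `⟨y,ξ⟩ = 0` and
`R(y) + ⟨y,ξ⟩ = (-1)^d · R∨(ξ)⁻¹`. -/
theorem lemma3_5_unique_critical_value
    {k : Type*} [Field k] {n d : ℕ} (hn : 1 ≤ n) (hd : 1 ≤ d)
    (U Ud : Set (Fin n → k))
    (f fd : (Fin n → k) → k) (F Fd : (Fin n → k) → (Fin n → k))
    (hUstab : ∀ c : k, c ≠ 0 → ∀ x ∈ U, c • x ∈ U)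
    (hUdstab : ∀ c : k, c ≠ 0 → ∀ ξ ∈ Ud, c • ξ ∈ Ud)
    (hf0 : ∀ x ∈ U, f x ≠ 0) (hfd0 : ∀ ξ ∈ Ud, fd ξ ≠ 0)
    (hFmem : ∀ x ∈ U, F x ∈ Ud) (hFdmem : ∀ ξ ∈ Ud, Fd ξ ∈ U)
    (hFdF : ∀ x ∈ U, Fd (F x) = x) (hFFd : ∀ ξ ∈ Ud, F (Fd ξ) = ξ)
    (hnorm : ∀ x ∈ U, fd (F x) = (f x)⁻¹)
    (hnormd : ∀ ξ ∈ Ud, f (Fd ξ) = (fd ξ)⁻¹)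
    (hfhom : ∀ c : k, c ≠ 0 → ∀ x ∈ U, f (c • x) = c ^ d * f x)
    (hFhom : ∀ c : k, c ≠ 0 → ∀ x ∈ U, F (c • x) = c⁻¹ • F x)
    (hfdhom : ∀ c : k, c ≠ 0 → ∀ ξ ∈ Ud, fd (c • ξ) = c ^ d * fd ξ)
    (hFdhom : ∀ c : k, c ≠ 0 → ∀ ξ ∈ Ud, Fd (c • ξ) = c⁻¹ • Fd ξ)
    (hEuler : ∀ ξ ∈ Ud, ∑ i, Fd ξ i * ξ i = (d : k))
    (R Rd : (Fin n → k) × (Fin d → k) → k)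
    (hR : ∀ x t, R (x, t) = f x / ∏ i, t i)
    (hRd : ∀ ξ t, Rd (ξ, t) = fd ξ / ∏ i, t i)
    (Φ Φd : (Fin n → k) × (Fin d → k) → (Fin n → k) × (Fin d → k))
    (hΦ : ∀ x t, Φ (x, t) = (R (x, t) • F x, fun i => -R (x, t) / t i))
    (hΦd : ∀ ξ t, Φd (ξ, t) = (Rd (ξ, t) • Fd ξ, fun i => -Rd (ξ, t) / t i))
    (pair : (Fin n → k) × (Fin d → k) → (Fin n → k) × (Fin d → k) → k)
    (hpair : ∀ y ξ, pair y ξ = (∑ i, y.1 i * ξ.1 i) + ∑ j, y.2 j * ξ.2 j)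
    (D Dd : Set ((Fin n → k) × (Fin d → k)))
    (hD : D = {y | y.1 ∈ U ∧ ∀ i, y.2 i ≠ 0})
    (hDd : Dd = {ξ | ξ.1 ∈ Ud ∧ ∀ i, ξ.2 i ≠ 0}) :
    ∀ ξ ∈ Dd, (∃! y, y ∈ D ∧ Φ y = -ξ) ∧
      ∀ y, y ∈ D → Φ y = -ξ →
        pair y ξ = 0 ∧ R y + pair y ξ = (-1 : k) ^ d * (Rd ξ)⁻¹ :=
  lemma3_5_unique_critical_value_general U Ud f fd F Fd hUstab hf0 hfd0 hFdmem hFdF hFFd hnormd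
    hfhom hFhom hFdhom hEuler R Rd hR hRd Φ hΦ pair hpair D Dd hD hDd
end

section
/- Let m ≥ 0 be a further integer. For x ∈ U, t = (t₁,…,t_{m+d}) ∈ (k^×)^{m+d} and u = (u₁,…,u_m) ∈ (k^×)^m set Q(x,t,u) = f(x)·u₁⋯u_m/(t₁⋯t_{m+d}), and define the gradient map Φ_Q(x,t,u) = (Q·F(x), −Q/t₁, …, −Q/t_{m+d}, Q/u₁, …, Q/u_m) ∈ k^n × k^{m+d} × k^m; define Q∨ and Φ_{Q∨} analogously from f∨, F∨ on U∨ × (k^×)^{m+d} × (k^×)^m. Then: (i) Φ_Q is a bijection from U × (k^×)^{m+d} × (k^×)^m onto U∨ × (k^×)^{m+d} × (k^×)^m with inverse ξ ↦ (−1)^{m+d} · Q∨(ξ)^{−2} · Φ_{Q∨}(ξ) (the scalar multiplying all coordinates simultaneously); (ii) for every ξ ∈ U∨ × (k^×)^{m+d} × (k^×)^m there is exactly one point y in U × (k^×)^{m+d} × (k^×)^m with Φ_Q(y) = −ξ (i.e. the function Q_ξ(y) = Q(y) + ⟨y,ξ⟩ has a unique critical point), and it satisfies ⟨y,ξ⟩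 = 0 and Q(y) + ⟨y,ξ⟩ = (−1)^{m+d} · Q∨(ξ)⁻¹, which is nonzero. (This is the assertion, used in the proof of the paper's Theorem 3, that Q_ξ has a unique critical point with nonzero critical value; it is checked as in Lemmas 3 and 3.5.) -/
open Finset

lemma prod_div_const' {k : Type*} [Field k] {m : ℕ} (a : k) (u : Fin m → k) :
    ∏ j, a / u j = a ^ m / ∏ j, u j := by
  rw [Finset.prod_div_distrib, Finset.prod_const, Finset.card_univ, Fintype.card_fin]

lemma key' {k : Type*} [Field k] {n : ℕ} (d m : ℕ)
    (U Ud : Set (Fin n → k))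
    (f fd : (Fin n → k) → k) (F Fd : (Fin n → k) → (Fin n → k))
    (hUdstab : ∀ c : k, c ≠ 0 → ∀ ξ ∈ Ud, c • ξ ∈ Ud)
    (hf0 : ∀ x ∈ U, f x ≠ 0)
    (hFmem : ∀ x ∈ U, F x ∈ Ud)
    (hFdF : ∀ x ∈ U, Fd (F x) = x)
    (hnorm : ∀ x ∈ U, fd (F x) = (f x)⁻¹)
    (hfdhom : ∀ c : k, c ≠ 0 → ∀ ξ ∈ Ud, fd (c • ξ) = c ^ d * fd ξ)
    (hFdhom : ∀ c : k, c ≠ 0 → ∀ ξ ∈ Ud, Fd (c • ξ) = c⁻¹ • Fd ξ)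
    (Q Qd : (Fin n → k) × (Fin (m + d) → k) × (Fin m → k) → k)
    (hQ : ∀ x t u, Q (x, t, u) = f x * (∏ j, u j) / ∏ i, t i)
    (hQd : ∀ ξ t u, Qd (ξ, t, u) = fd ξ * (∏ j, u j) / ∏ i, t i)
    (ΦQ ΦQd : (Fin n → k) × (Fin (m + d) → k) × (Fin m → k) →
      (Fin n → k) × (Fin (m + d) → k) × (Fin m → k))
    (hΦQ : ∀ x t u, ΦQ (x, t, u) =
      (Q (x, t, u) • F x, fun i => -Q (x, t, u) / t i, fun j => Q (x, t, u) / u j))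
    (hΦQd : ∀ ξ t u, ΦQd (ξ, t, u) =
      (Qd (ξ, t, u) • Fd ξ, fun i => -Qd (ξ, t, u) / t i, fun j => Qd (ξ, t, u) / u j))
    (x : Fin n → k) (t : Fin (m + d) → k) (u : Fin m → k)
    (hx : x ∈ U) (ht : ∀ i, t i ≠ 0) (hu : ∀ j, u j ≠ 0) :
    Q (x, t, u) ≠ 0 ∧
    ((ΦQ (x, t, u)).1 ∈ Ud ∧ (∀ i, (ΦQ (x, t, u)).2.1 i ≠ 0) ∧
      ∀ j, (ΦQ (x, t, u)).2.2 j ≠ 0) ∧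
    Qd (ΦQ (x, t, u)) = (-1 : k) ^ (m + d) * (Q (x, t, u))⁻¹ ∧
    ((-1 : k) ^ (m + d) * ((Qd (ΦQ (x, t, u))) ^ 2)⁻¹) • ΦQd (ΦQ (x, t, u)) = (x, t, u) := by
  have hfx := hf0 x hx
  have hpt : (∏ i, t i) ≠ 0 := Finset.prod_ne_zero_iff.mpr fun i _ => ht i
  have hpu : (∏ j, u j) ≠ 0 := Finset.prod_ne_zero_iff.mpr fun j _ => hu j
  set Qv := Q (x, t, u) with hQv
  have hQveq : Qv = f x * (∏ j, u j) / ∏ i, t i := hQ x t u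
  have hQv0 : Qv ≠ 0 := by
    rw [hQveq]; exact div_ne_zero (mul_ne_zero hfx hpu) hpt
  have he : ((-1 : k) ^ (m + d)) ≠ 0 := pow_ne_zero _ (by norm_num)
  have he2 : ((-1 : k) ^ (m + d)) * ((-1 : k) ^ (m + d)) = 1 := by
    rw [← pow_add, ← two_mul, pow_mul]; norm_num
  have hΦ : ΦQ (x, t, u) = (Qv • F x, fun i => -Qv / t i, fun j => Qv / u j) := hΦQ x t u
  have hmem1 : Qv • F x ∈ Ud := hUdstab Qv hQv0 _ (hFmem x hx)
  -- Qd value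
  have hQdval : Qd (ΦQ (x, t, u)) = (-1 : k) ^ (m + d) * Qv⁻¹ := by
    rw [hΦ, hQd]
    have h1 : fd (Qv • F x) = Qv ^ d * (f x)⁻¹ := by
      rw [hfdhom Qv hQv0 _ (hFmem x hx), hnorm x hx]
    have h2 : (∏ j, Qv / u j) = Qv ^ m / ∏ j, u j := prod_div_const' Qv u
    have h3 : (∏ i, -Qv / t i) = (-1 : k) ^ (m + d) * Qv ^ (m + d) / ∏ i, t i := by
      rw [prod_div_const', neg_pow]
    have hQm : f x * (∏ j, u j) = Qv * ∏ i, t i := by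
      rw [hQveq]; field_simp
    rw [h1, h2, h3]
    field_simp
    linear_combination (-((-1 : k) ^ (m + d) * (-1 : k) ^ (m + d) * Qv ^ (m + d))) * hQm
      - (Qv ^ (m + d) * Qv * (∏ i, t i)) * he2
  refine ⟨hQv0, ⟨by rw [hΦ]; exact hmem1, ?_, ?_⟩, hQdval, ?_⟩
  · intro i; rw [hΦ]; exact div_ne_zero (neg_ne_zero.mpr hQv0) (ht i)
  · intro j; rw [hΦ]; exact div_ne_zero hQv0 (hu j)
  · set Qw := Qd (ΦQ (x, t, u)) with hQw
    have hQw0 : Qw ≠ 0 := by rw [hQdval]; exact mul_ne_zero he (inv_ne_zero hQv0)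
    have hFdval : Fd (Qv • F x) = Qv⁻¹ • x := by
      rw [hFdhom Qv hQv0 _ (hFmem x hx), hFdF x hx]
    have hΦd : ΦQd (ΦQ (x, t, u)) =
        (Qw • Fd (Qv • F x), fun i => -Qw / (-Qv / t i), fun j => Qw / (Qv / u j)) := by
      conv_lhs => rw [hΦ]
      rw [hΦQd]
      rw [hΦ] at hQw
      rw [← hQw]
    rw [hΦd, hFdval]
    have hc : ((-1 : k) ^ (m + d) * (Qw ^ 2)⁻¹) * Qw * Qv⁻¹ = 1 := by
      rw [hQdval]
      field_simp
    refine Prod.ext ?_ (Prod.ext ?_ ?_)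
    · show ((-1 : k) ^ (m + d) * (Qw ^ 2)⁻¹) • Qw • Qv⁻¹ • x = x
      rw [smul_smul, smul_smul, hc, one_smul]
    · show (fun i => ((-1 : k) ^ (m + d) * (Qw ^ 2)⁻¹) * (-Qw / (-Qv / t i))) = t
      funext i
      have : -Qw / (-Qv / t i) = Qw * Qv⁻¹ * t i := by
        field_simp
      rw [this]
      calc ((-1 : k) ^ (m + d) * (Qw ^ 2)⁻¹) * (Qw * Qv⁻¹ * t i)
          = (((-1 : k) ^ (m + d) * (Qw ^ 2)⁻¹) * Qw * Qv⁻¹) * t i := by ring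
        _ = t i := by rw [hc, one_mul]
    · show (fun j => ((-1 : k) ^ (m + d) * (Qw ^ 2)⁻¹) * (Qw / (Qv / u j))) = u
      funext j
      have : Qw / (Qv / u j) = Qw * Qv⁻¹ * u j := by
        field_simp
      rw [this]
      calc ((-1 : k) ^ (m + d) * (Qw ^ 2)⁻¹) * (Qw * Qv⁻¹ * u j)
          = (((-1 : k) ^ (m + d) * (Qw ^ 2)⁻¹) * Qw * Qv⁻¹) * u j := by ring
        _ = u j := by rw [hc, one_mul]

lemma scaleQ' {k : Type*} [Field k] {n : ℕ} (d m : ℕ)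
    (U : Set (Fin n → k)) (f : (Fin n → k) → k) (F : (Fin n → k) → (Fin n → k))
    (hfhom : ∀ c : k, c ≠ 0 → ∀ x ∈ U, f (c • x) = c ^ d * f x)
    (hFhom : ∀ c : k, c ≠ 0 → ∀ x ∈ U, F (c • x) = c⁻¹ • F x)
    (Q : (Fin n → k) × (Fin (m + d) → k) × (Fin m → k) → k)
    (ΦQ : (Fin n → k) × (Fin (m + d) → k) × (Fin m → k) →
      (Fin n → k) × (Fin (m + d) → k) × (Fin m → k))
    (hQ : ∀ x t u, Q (x, t, u) = f x * (∏ j, u j) / ∏ i, t i)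
    (hΦQ : ∀ x t u, ΦQ (x, t, u) =
      (Q (x, t, u) • F x, fun i => -Q (x, t, u) / t i, fun j => Q (x, t, u) / u j))
    (c : k) (hc : c ≠ 0)
    (y : (Fin n → k) × (Fin (m + d) → k) × (Fin m → k))
    (hy1 : y.1 ∈ U) (hy2 : ∀ i, y.2.1 i ≠ 0) (hy3 : ∀ j, y.2.2 j ≠ 0) :
    Q (c • y) = Q y ∧ ΦQ (c • y) = c⁻¹ • ΦQ y := by
  obtain ⟨x, t, u⟩ := y
  simp only at hy1 hy2 hy3
  have hpt : (∏ i, t i) ≠ 0 := Finset.prod_ne_zero_iff.mpr fun i _ => hy2 i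
  have hmk : c • ((x, t, u) : (Fin n → k) × (Fin (m + d) → k) × (Fin m → k))
      = (c • x, c • t, c • u) := rfl
  have hpu' : (∏ j, (c • u) j) = c ^ m * ∏ j, u j := by
    simp only [Pi.smul_apply, smul_eq_mul]
    rw [Finset.prod_mul_distrib, Finset.prod_const, Finset.card_univ, Fintype.card_fin]
  have hpt' : (∏ i, (c • t) i) = c ^ (m + d) * ∏ i, t i := by
    simp only [Pi.smul_apply, smul_eq_mul]
    rw [Finset.prod_mul_distrib, Finset.prod_const, Finset.card_univ, Fintype.card_fin]
  have hQeq : Q (c • ((x, t, u) : (Fin n → k) × (Fin (m + d) → k) × (Fin m → k)))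
      = Q (x, t, u) := by
    rw [hmk, hQ, hQ, hfhom c hc x hy1, hpu', hpt']
    field_simp
    ring
  refine ⟨hQeq, ?_⟩
  rw [hmk, hΦQ, hΦQ]
  rw [show Q ((c • x, c • t, c • u) : (Fin n → k) × (Fin (m + d) → k) × (Fin m → k))
      = Q (x, t, u) from hmk ▸ hQeq]
  rw [hFhom c hc x hy1]
  refine Prod.ext ?_ (Prod.ext ?_ ?_)
  · show Q (x, t, u) • c⁻¹ • F x = c⁻¹ • Q (x, t, u) • F x
    rw [smul_comm]
  · funext i
    show -Q (x, t, u) / (c • t) i = c⁻¹ * (-Q (x, t, u) / t i)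
    simp only [Pi.smul_apply, smul_eq_mul]
    field_simp
  · funext j
    show Q (x, t, u) / (c • u) j = c⁻¹ * (Q (x, t, u) / u j)
    simp only [Pi.smul_apply, smul_eq_mul]
    field_simp


/-- The analogue of Lemmas 3 and 3.5 for
`Q(x,t,u) = f(x)·u₁⋯u_m/(t₁⋯t_{m+d})`, used in the proof of Theorem 3:
(i) the gradient map `Φ_Q` is a bijection from `U × (k^×)^{m+d} × (k^×)^m` onto
`U∨ × (k^×)^{m+d} × (k^×)^m` with inverse `ξ ↦ (-1)^{m+d}·Q∨(ξ)⁻²·Φ_{Q∨}(ξ)`;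
(ii) for each `ξ` there is a unique `y` with `Φ_Q(y) = -ξ`, and it satisfies
`⟨y,ξ⟩ = 0` and `Q(y) + ⟨y,ξ⟩ = (-1)^{m+d}·Q∨(ξ)⁻¹ ≠ 0`. -/
theorem thm3_unique_nondegenerate_critical_point
    {k : Type*} [Field k] {n d : ℕ} (m : ℕ) (hn : 1 ≤ n) (hd : 1 ≤ d)
    (U Ud : Set (Fin n → k))
    (f fd : (Fin n → k) → k) (F Fd : (Fin n → k) → (Fin n → k))
    (hUstab : ∀ c : k, c ≠ 0 → ∀ x ∈ U, c • x ∈ U)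
    (hUdstab : ∀ c : k, c ≠ 0 → ∀ ξ ∈ Ud, c • ξ ∈ Ud)
    (hf0 : ∀ x ∈ U, f x ≠ 0) (hfd0 : ∀ ξ ∈ Ud, fd ξ ≠ 0)
    (hFmem : ∀ x ∈ U, F x ∈ Ud) (hFdmem : ∀ ξ ∈ Ud, Fd ξ ∈ U)
    (hFdF : ∀ x ∈ U, Fd (F x) = x) (hFFd : ∀ ξ ∈ Ud, F (Fd ξ) = ξ)
    (hnorm : ∀ x ∈ U, fd (F x) = (f x)⁻¹)
    (hnormd : ∀ ξ ∈ Ud, f (Fd ξ) = (fd ξ)⁻¹)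
    (hfhom : ∀ c : k, c ≠ 0 → ∀ x ∈ U, f (c • x) = c ^ d * f x)
    (hFhom : ∀ c : k, c ≠ 0 → ∀ x ∈ U, F (c • x) = c⁻¹ • F x)
    (hfdhom : ∀ c : k, c ≠ 0 → ∀ ξ ∈ Ud, fd (c • ξ) = c ^ d * fd ξ)
    (hFdhom : ∀ c : k, c ≠ 0 → ∀ ξ ∈ Ud, Fd (c • ξ) = c⁻¹ • Fd ξ)
    (hEuler : ∀ ξ ∈ Ud, ∑ i, Fd ξ i * ξ i = (d : k))
    (Q Qd : (Fin n → k) × (Fin (m + d) → k) × (Fin m → k) → k)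
    (hQ : ∀ x t u, Q (x, t, u) = f x * (∏ j, u j) / ∏ i, t i)
    (hQd : ∀ ξ t u, Qd (ξ, t, u) = fd ξ * (∏ j, u j) / ∏ i, t i)
    (ΦQ ΦQd : (Fin n → k) × (Fin (m + d) → k) × (Fin m → k) →
      (Fin n → k) × (Fin (m + d) → k) × (Fin m → k))
    (hΦQ : ∀ x t u, ΦQ (x, t, u) =
      (Q (x, t, u) • F x, fun i => -Q (x, t, u) / t i, fun j => Q (x, t, u) / u j))
    (hΦQd : ∀ ξ t u, ΦQd (ξ, t, u) =
      (Qd (ξ, t, u) • Fd ξ, fun i => -Qd (ξ, t, u) / t i, fun j => Qd (ξ, t, u) / u j))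
    (pair : (Fin n → k) × (Fin (m + d) → k) × (Fin m → k) →
      (Fin n → k) × (Fin (m + d) → k) × (Fin m → k) → k)
    (hpair : ∀ y ξ, pair y ξ =
      (∑ i, y.1 i * ξ.1 i) + (∑ i, y.2.1 i * ξ.2.1 i) + ∑ j, y.2.2 j * ξ.2.2 j)
    (D Dd : Set ((Fin n → k) × (Fin (m + d) → k) × (Fin m → k)))
    (hD : D = {y | y.1 ∈ U ∧ (∀ i, y.2.1 i ≠ 0) ∧ ∀ j, y.2.2 j ≠ 0})
    (hDd : Dd = {ξ | ξ.1 ∈ Ud ∧ (∀ i, ξ.2.1 i ≠ 0) ∧ ∀ j, ξ.2.2 j ≠ 0}) :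
    (Set.BijOn ΦQ D Dd ∧
      (∀ ξ ∈ Dd, (((-1 : k) ^ (m + d) * ((Qd ξ) ^ 2)⁻¹) • ΦQd ξ) ∈ D ∧
        ΦQ (((-1 : k) ^ (m + d) * ((Qd ξ) ^ 2)⁻¹) • ΦQd ξ) = ξ) ∧
      (∀ y ∈ D, ((-1 : k) ^ (m + d) * ((Qd (ΦQ y)) ^ 2)⁻¹) • ΦQd (ΦQ y) = y)) ∧
    (∀ ξ ∈ Dd, (∃! y, y ∈ D ∧ ΦQ y = -ξ) ∧
      (∀ y, y ∈ D → ΦQ y = -ξ →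
        pair y ξ = 0 ∧ Q y + pair y ξ = (-1 : k) ^ (m + d) * (Qd ξ)⁻¹) ∧
      (-1 : k) ^ (m + d) * (Qd ξ)⁻¹ ≠ 0) := by
  subst hD hDd
  have he : ((-1 : k) ^ (m + d)) ≠ 0 := pow_ne_zero _ (by norm_num)
  have he2 : ((-1 : k) ^ (m + d)) * ((-1 : k) ^ (m + d)) = 1 := by
    rw [← pow_add, ← two_mul, pow_mul]; norm_num
  have hei : ((-1 : k) ^ (m + d))⁻¹ = (-1 : k) ^ (m + d) :=
    inv_eq_of_mul_eq_one_right he2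
  have keyF := key' d m U Ud f fd F Fd hUdstab hf0 hFmem hFdF hnorm hfdhom hFdhom
    Q Qd hQ hQd ΦQ ΦQd hΦQ hΦQd
  have keyB := key' d m Ud U fd f Fd F hUstab hfd0 hFdmem hFFd hnormd hfhom hFhom
    Qd Q hQd hQ ΦQd ΦQ hΦQd hΦQ
  have mapsTo : ∀ y ∈ {y : (Fin n → k) × (Fin (m + d) → k) × (Fin m → k) |
      y.1 ∈ U ∧ (∀ i, y.2.1 i ≠ 0) ∧ ∀ j, y.2.2 j ≠ 0},
      ΦQ y ∈ {ξ : (Fin n → k) × (Fin (m + d) → k) × (Fin m → k) |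
      ξ.1 ∈ Ud ∧ (∀ i, ξ.2.1 i ≠ 0) ∧ ∀ j, ξ.2.2 j ≠ 0} := by
    rintro ⟨x, t, u⟩ ⟨hx, ht, hu⟩
    exact (keyF x t u hx ht hu).2.1
  have leftInv : ∀ y ∈ {y : (Fin n → k) × (Fin (m + d) → k) × (Fin m → k) |
      y.1 ∈ U ∧ (∀ i, y.2.1 i ≠ 0) ∧ ∀ j, y.2.2 j ≠ 0},
      ((-1 : k) ^ (m + d) * ((Qd (ΦQ y)) ^ 2)⁻¹) • ΦQd (ΦQ y) = y := by
    rintro ⟨x, t, u⟩ ⟨hx, ht, hu⟩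
    exact (keyF x t u hx ht hu).2.2.2
  have invright : ∀ ξ ∈ {ξ : (Fin n → k) × (Fin (m + d) → k) × (Fin m → k) |
      ξ.1 ∈ Ud ∧ (∀ i, ξ.2.1 i ≠ 0) ∧ ∀ j, ξ.2.2 j ≠ 0},
      (((-1 : k) ^ (m + d) * ((Qd ξ) ^ 2)⁻¹) • ΦQd ξ) ∈
        {y : (Fin n → k) × (Fin (m + d) → k) × (Fin m → k) |
          y.1 ∈ U ∧ (∀ i, y.2.1 i ≠ 0) ∧ ∀ j, y.2.2 j ≠ 0} ∧
      ΦQ (((-1 : k) ^ (m + d) * ((Qd ξ) ^ 2)⁻¹) • ΦQd ξ) = ξ := by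
    rintro ⟨ξ1, τ, υ⟩ ⟨hξ1, hτ, hυ⟩
    obtain ⟨hQd0, ⟨hm1, hm2, hm3⟩, hQval, hinv⟩ := keyB ξ1 τ υ hξ1 hτ hυ
    set s : k := (-1 : k) ^ (m + d) * ((Qd (ξ1, τ, υ)) ^ 2)⁻¹ with hs
    have hs0 : s ≠ 0 := mul_ne_zero he (inv_ne_zero (pow_ne_zero _ hQd0))
    refine ⟨⟨?_, ?_, ?_⟩, ?_⟩
    · exact hUstab s hs0 _ hm1
    · intro i; exact mul_ne_zero hs0 (hm2 i)
    · intro j; exact mul_ne_zero hs0 (hm3 j)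
    · have hscale := (scaleQ' d m U f F hfhom hFhom Q ΦQ hQ hΦQ s hs0
        (ΦQd (ξ1, τ, υ)) hm1 hm2 hm3).2
      rw [hscale]
      have hsinv : s⁻¹ = (-1 : k) ^ (m + d) * ((Q (ΦQd (ξ1, τ, υ))) ^ 2)⁻¹ := by
        rw [hQval, hs]
        rw [mul_inv, hei, inv_inv, mul_pow, mul_inv, inv_pow, inv_inv]
        rw [show ((-1 : k) ^ (m + d)) ^ 2 = 1 from by
          rw [sq, he2]]
        rw [inv_one, one_mul]
      rw [hsinv, hinv]
  refine ⟨⟨⟨mapsTo, ?_, ?_⟩, invright, leftInv⟩, ?_⟩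
  · -- InjOn
    intro y1 h1 y2 h2 heq
    rw [← leftInv y1 h1, ← leftInv y2 h2, heq]
  · -- SurjOn
    intro ξ hξ
    exact ⟨_, (invright ξ hξ).1, (invright ξ hξ).2⟩
  · rintro ⟨ξ1, τ, υ⟩ ⟨hξ1, hτ, hυ⟩
    have hpτ : (∏ i, τ i) ≠ 0 := Finset.prod_ne_zero_iff.mpr fun i _ => hτ i
    have hpυ : (∏ j, υ j) ≠ 0 := Finset.prod_ne_zero_iff.mpr fun j _ => hυ j
    have hQdξ0 : Qd (ξ1, τ, υ) ≠ 0 := by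
      rw [hQd]; exact div_ne_zero (mul_ne_zero (hfd0 ξ1 hξ1) hpυ) hpτ
    have hnξ : -((ξ1, τ, υ) : (Fin n → k) × (Fin (m + d) → k) × (Fin m → k)) ∈
        {ξ : (Fin n → k) × (Fin (m + d) → k) × (Fin m → k) |
          ξ.1 ∈ Ud ∧ (∀ i, ξ.2.1 i ≠ 0) ∧ ∀ j, ξ.2.2 j ≠ 0} := by
      refine ⟨?_, fun i => neg_ne_zero.mpr (hτ i), fun j => neg_ne_zero.mpr (hυ j)⟩
      show -ξ1 ∈ Ud
      rw [show -ξ1 = (-1 : k) • ξ1 from (neg_one_smul k ξ1).symm]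
      exact hUdstab (-1) (by norm_num) _ hξ1
    obtain ⟨hmem0, heq0⟩ := invright _ hnξ
    refine ⟨⟨_, ⟨hmem0, heq0⟩, ?_⟩, ?_, ?_⟩
    · rintro y' ⟨hy', hy'eq⟩
      rw [← leftInv y' hy', hy'eq]
    · rintro ⟨x, t, u⟩ ⟨hx, ht, hu⟩ hyeq
      obtain ⟨hQv0, ⟨hΦ1, hΦ2, hΦ3⟩, hQdval, -⟩ := keyF x t u hx ht hu
      have hξeq : ((ξ1, τ, υ) : (Fin n → k) × (Fin (m + d) → k) × (Fin m → k))
          = (-1 : k) • ΦQ (x, t, u) := by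
        rw [hyeq, neg_one_smul, neg_neg]
      have hQdξ : Qd (ξ1, τ, υ) = (-1 : k) ^ (m + d) * (Q (x, t, u))⁻¹ := by
        rw [hξeq, (scaleQ' d m Ud fd Fd hfdhom hFdhom Qd ΦQd hQd hΦQd (-1)
          (by norm_num) (ΦQ (x, t, u)) hΦ1 hΦ2 hΦ3).1, hQdval]
      have hE : ∑ i, x i * F x i = (d : k) := by
        have := hEuler (F x) (hFmem x hx)
        rwa [hFdF x hx] at this
      have hp : pair (x, t, u) (ξ1, τ, υ) = 0 := by
        rw [hpair, hξeq, hΦQ]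
        simp only [Prod.smul_fst, Prod.smul_snd, Pi.smul_apply, smul_eq_mul]
        have s1 : ∑ i, x i * (-1 * (Q (x, t, u) * F x i))
            = -Q (x, t, u) * (d : k) := by
          rw [show ∑ i, x i * (-1 * (Q (x, t, u) * F x i))
              = -Q (x, t, u) * ∑ i, x i * F x i from by
            rw [Finset.mul_sum]; exact Finset.sum_congr rfl fun i _ => by ring, hE]
        have s2 : ∑ i, t i * (-1 * (-Q (x, t, u) / t i))
            = ((m + d : ℕ) : k) * Q (x, t, u) := by
          rw [show ∑ i, t i * (-1 * (-Q (x, t, u) / t i))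
              = ∑ _i : Fin (m + d), Q (x, t, u) from
            Finset.sum_congr rfl fun i _ => by field_simp [ht i]]
          rw [Finset.sum_const, Finset.card_univ, Fintype.card_fin, nsmul_eq_mul]
        have s3 : ∑ j, u j * (-1 * (Q (x, t, u) / u j))
            = ((m : ℕ) : k) * (-Q (x, t, u)) := by
          rw [show ∑ j, u j * (-1 * (Q (x, t, u) / u j))
              = ∑ _j : Fin m, -Q (x, t, u) from
            Finset.sum_congr rfl fun j _ => by field_simp [hu j]]
          rw [Finset.sum_const, Finset.card_univ, Fintype.card_fin, nsmul_eq_mul]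
        rw [s1, s2, s3]
        push_cast
        ring
      refine ⟨hp, ?_⟩
      rw [hp, add_zero, hQdξ, mul_inv, hei, inv_inv, ← mul_assoc, he2, one_mul]
    · exact mul_ne_zero he (inv_ne_zero hQdξ0)
end

section
/- Let N ≥ 1 be an integer, let U ⊆ k^N be a subset with a·U = U for all a ∈ k^× (scalar multiplication acting on all coordinates), let R : k^N → k be a function with R(y) ≠ 0 and R(a·y) = R(y) for all y ∈ U, a ∈ k^×, let χ_V be a multiplicative character of k, and let v : k^N → ℂ be a function with v(a·y) = χ_V(a)·v(y) for all y ∈ U, a ∈ k^×. Then for every multiplicative character χ of k and every ξ ∈ k^N: (Σ_{b∈k^×} χ⁻¹(b)·ψ(b)) · Σ_{y∈U} χ(R(y))·v(y)·ψ(⟨y,ξ⟩) = Σ_{a∈k^×} (χ⁻¹·χ_V)(a) · Σ_{y∈U} v(y)·ψ(a·(R(y) + ⟨y,ξ⟩)), where ⟨y,ξ⟩ = Σ_{i=1}^N y_i·ξ_i. (This is the character-sum identity underlying the paper's Lemma 4, obtained there by the substitution y ↦ a·y using degree-zero homogeneity of R and the equivariance of v.) -/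
open Finset

/-- The character-sum identity underlying Lemma 4: if `U ⊆ k^N` is stable under the
dilation action of `k^×`, `R` is a nonvanishing degree-zero homogeneous function on `U`,
and `v` transforms under dilations via the multiplicative character `χ_V`, then for any
multiplicative character `χ` and any `ξ ∈ k^N`,
`(Σ_{b∈k^×} χ⁻¹(b)ψ(b)) · Σ_{y∈U} χ(R(y)) v(y) ψ(⟨y,ξ⟩)
  = Σ_{a∈k^×} (χ⁻¹χ_V)(a) · Σ_{y∈U} v(y) ψ(a(R(y)+⟨y,ξ⟩))`. -/
theorem lemma4_character_sum {k : Type*} [Field k] [Fintype k] [DecidableEq k]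
    (ψ : AddChar k ℂ) (hψ : ψ ≠ 1) {N : ℕ} (hN : 1 ≤ N)
    (U : Finset (Fin N → k))
    (hU : ∀ a : k, a ≠ 0 → U.image (fun y => a • y) = U)
    (R : (Fin N → k) → k)
    (hR0 : ∀ y ∈ U, R y ≠ 0)
    (hRhom : ∀ a : k, a ≠ 0 → ∀ y ∈ U, R (a • y) = R y)
    (χV : MulChar k ℂ)
    (v : (Fin N → k) → ℂ)
    (hv : ∀ a : k, a ≠ 0 → ∀ y ∈ U, v (a • y) = χV a * v y)
    (χ : MulChar k ℂ) (ξ : Fin N → k) :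
    (∑ b : kˣ, χ⁻¹ (b : k) * ψ (b : k)) *
        ∑ y ∈ U, χ (R y) * v y * ψ (∑ i, y i * ξ i) =
      ∑ a : kˣ, (χ⁻¹ * χV) (a : k) *
        ∑ y ∈ U, v y * ψ ((a : k) * (R y + ∑ i, y i * ξ i)) := by
  classical
  have hmc : ∀ y ∈ U, IsUnit (R y) := fun y hy => (hR0 y hy).isUnit
  -- Step 1: for each unit a, substitute y ↦ a • y in the inner sum
  have key : ∀ a : kˣ,
      ∑ y ∈ U, v y * ψ ((a : k) * R y + ∑ i, y i * ξ i)
        = χV (a : k) * ∑ y ∈ U, v y * ψ ((a : k) * (R y + ∑ i, y i * ξ i)) := by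
    intro a
    have ha : (a : k) ≠ 0 := a.ne_zero
    conv_lhs => rw [← hU (a : k) ha]
    rw [Finset.sum_image (fun x _ y _ h => smul_right_injective (Fin N → k) ha h),
      Finset.mul_sum]
    refine Finset.sum_congr rfl fun y hy => ?_
    have h1 : ∑ i, ((a : k) • y) i * ξ i = (a : k) * ∑ i, y i * ξ i := by
      rw [Finset.mul_sum]
      exact Finset.sum_congr rfl fun i _ => by simp [smul_eq_mul, mul_assoc]
    rw [hv _ ha y hy, hRhom _ ha y hy, h1, mul_add]
    ring
  -- Step 2: rewrite the LHS by substituting b ↦ (R y) * c in the Gauss-type sum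
  have lhs_eq : (∑ b : kˣ, χ⁻¹ (b : k) * ψ (b : k)) *
        ∑ y ∈ U, χ (R y) * v y * ψ (∑ i, y i * ξ i)
      = ∑ c : kˣ, χ⁻¹ (c : k) *
          ∑ y ∈ U, v y * ψ ((c : k) * R y + ∑ i, y i * ξ i) := by
    rw [Finset.mul_sum]
    have step : ∀ y ∈ U,
        (∑ b : kˣ, χ⁻¹ (b : k) * ψ (b : k)) * (χ (R y) * v y * ψ (∑ i, y i * ξ i))
          = ∑ c : kˣ, χ⁻¹ (c : k) * (v y * ψ ((c : k) * R y + ∑ i, y i * ξ i)) := by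
      intro y hy
      have hR : R y ≠ 0 := hR0 y hy
      set u : kˣ := Units.mk0 (R y) hR with hu
      have hre : (∑ b : kˣ, χ⁻¹ (b : k) * ψ (b : k))
          = ∑ c : kˣ, χ⁻¹ ((u : k) * (c : k)) * ψ ((u : k) * (c : k)) := by
        refine (Fintype.sum_equiv (Equiv.mulLeft u)
          (fun c => χ⁻¹ (((u * c : kˣ) : k)) * ψ (((u * c : kˣ) : k)))
          (fun b => χ⁻¹ (b : k) * ψ (b : k)) (fun c => by simp)).symm.trans ?_
        exact Finset.sum_congr rfl fun c _ => by push_cast; ring_nf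
      rw [hre, Finset.sum_mul]
      refine Finset.sum_congr rfl fun c _ => ?_
      have hcoef : χ⁻¹ ((u : k) * (c : k)) * χ (R y) = χ⁻¹ (c : k) := by
        have : (u : k) = R y := rfl
        rw [this, map_mul, mul_comm (χ⁻¹ (R y)) (χ⁻¹ (c : k)), mul_assoc]
        have h2 : χ⁻¹ (R y) * χ (R y) = 1 := by
          rw [← MulChar.mul_apply, inv_mul_cancel, MulChar.one_apply hR.isUnit]
        rw [h2, mul_one]
      have hψs : ψ ((u : k) * (c : k)) * ψ (∑ i, y i * ξ i)
          = ψ ((c : k) * R y + ∑ i, y i * ξ i) := by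
        rw [← AddChar.map_add_eq_mul]
        congr 1
        show R y * (c : k) + _ = _
        ring
      calc χ⁻¹ ((u : k) * (c : k)) * ψ ((u : k) * (c : k)) * (χ (R y) * v y * ψ (∑ i, y i * ξ i))
          = (χ⁻¹ ((u : k) * (c : k)) * χ (R y)) * (v y * (ψ ((u : k) * (c : k)) * ψ (∑ i, y i * ξ i))) := by ring
        _ = χ⁻¹ (c : k) * (v y * ψ ((c : k) * R y + ∑ i, y i * ξ i)) := by rw [hcoef, hψs]
    rw [Finset.sum_congr rfl step, Finset.sum_comm]
    exact Finset.sum_congr rfl fun c _ => (Finset.mul_sum _ _ _).symm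
  rw [lhs_eq]
  refine Finset.sum_congr rfl fun a _ => ?_
  rw [key a, MulChar.mul_apply]
  ring
end
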